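/- arXiv:1605.00836 — 2 statements merged into one kernel-verified Lean document; each statement's English description precedes it below -/
import Mathlib

section
/- Let $H \in C^1(\mathbb{R})$ be convex, $k \in W^{1,1}([0,T])$ be nonnegative and nonincreasing, and $u$ be sufficiently smooth on $(0,T)$. Then for a.e. $t \in (0,T)$: $H'(u(t))\frac{d}{dt}(k*u)(t) = \frac{d}{dt}(k*H(u))(t) + (H'(u(t))u(t) - H(u(t)))k(t) + \int_0^t (H(u(t-s)) - H(u(t)) - H'(u(t))[u(t-s)-u(t)])(-k'(s))\,ds$. -/
/-!
Writing the convolution as `∫₀ᵗ k(s) v(t - s) ds` and differentiating (under the integral sign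
for the dependence on `t` inside, and at the moving endpoint) gives
`(k * v)'(t) = k(t) v(0) + ∫₀ᵗ k(s) v'(t - s) ds`. Integrating by parts in `s` turns this into
`(k * v)'(t) = k(t) v(t) + ∫₀ᵗ k'(s) (v(t - s) - v(t)) ds`; the boundary term at `0` vanishes
because integrability of `k'` gives `k` a finite limit at `0⁺`. Applying this formula to
`v = u` and `v = H ∘ u` and subtracting, the identity becomes linear algebra of integrals.
-/

open MeasureTheory Set

noncomputable section

/-- Laplace convolution on `[0,t]`: `(k*u)(t) = ∫_0^t k(t-s) u(s) ds`. -/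
def tconv (k u : ℝ → ℝ) (t : ℝ) : ℝ := ∫ s in Set.Ioc 0 t, k (t - s) * u s

open Filter Topology Interval

theorem exists_tendsto_nhdsGT_of_hasDerivAt_of_integrableOn {k k' : ℝ → ℝ} {a b : ℝ} (hab : a < b)
    (hderiv : ∀ x ∈ Ioo a b, HasDerivAt k (k' x) x) (hint : IntegrableOn k' (Ioc a b)) :
    ∃ L, Tendsto k (𝓝[>] a) (𝓝 L) := by
  obtain ⟨c, hac, hcb⟩ := exists_between hab
  have hint' : IntegrableOn k' (uIcc a c) := by
    rw [uIcc_of_le hac.le, integrableOn_Icc_iff_integrableOn_Ioc]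
    exact hint.mono_set (Ioc_subset_Ioc_right hcb.le)
  have hftc : ∀ x ∈ Ioc a c, k x = k c - ∫ y in x..c, k' y := by
    intro x hx
    have hsub : uIcc x c ⊆ uIcc a c := by
      rw [uIcc_of_le hx.2, uIcc_of_le hac.le]; exact Icc_subset_Icc_left hx.1.le
    have hderiv' : ∀ y ∈ uIcc x c, HasDerivAt k (k' y) y := fun y hy => by
      rw [uIcc_of_le hx.2] at hy; exact hderiv y ⟨hx.1.trans_le hy.1, hy.2.trans_lt hcb⟩
    rw [intervalIntegral.integral_eq_sub_of_hasDerivAt hderiv'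
      (hint'.intervalIntegrable.mono_set hsub)]
    ring
  have hprim := (intervalIntegral.continuousOn_primitive_interval_left hint' a left_mem_uIcc)
  refine ⟨k c - ∫ y in a..c, k' y, ?_⟩
  rw [← nhdsWithin_Ioc_eq_nhdsGT hac]
  refine ((tendsto_const_nhds.sub hprim).mono_left (nhdsWithin_mono _ ?_)).congr' ?_
  · rw [uIcc_of_le hac.le]; exact Ioc_subset_Icc_self
  · filter_upwards [self_mem_nhdsWithin] with x hx using (hftc x hx).symm

theorem intervalIntegral_deriv_mul_sub_eq {k k' v : ℝ → ℝ} {t : ℝ} (ht : 0 < t)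
    (hderiv : ∀ x ∈ Ioo 0 t, HasDerivAt k (k' x) x) (hkt : ContinuousAt k t)
    (hk : IntegrableOn k (Ioc 0 t)) (hk' : IntegrableOn k' (Ioc 0 t)) (hv : ContDiff ℝ 1 v) :
    ∫ s in (0)..t, k' s * (v (t - s) - v t)
      = k t * (v 0 - v t) + ∫ s in (0)..t, k s * deriv v (t - s) := by
  have hv' : ∀ x, HasDerivAt v (deriv v x) x := fun x =>
    (hv.differentiable one_ne_zero x).hasDerivAt
  have hvc : Continuous fun s => v (t - s) - v t := by fun_prop
  have hvx : ∀ x, HasDerivAt (fun s => v (t - s) - v t) (-deriv v (t - x)) x := fun x =>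
    ((hv' (t - x)).comp_const_sub t x).sub_const (v t)
  have hdvc : Continuous fun s => deriv v (t - s) :=
    (hv.continuous_deriv le_rfl).comp (continuous_sub_left t)
  have hI1 : IntervalIntegrable (fun s => k' s * (v (t - s) - v t)) volume 0 t :=
    ((intervalIntegrable_iff_integrableOn_Ioc_of_le ht.le).2 hk').mul_continuousOn
      hvc.continuousOn
  have hI2 : IntervalIntegrable (fun s => k s * deriv v (t - s)) volume 0 t :=
    ((intervalIntegrable_iff_integrableOn_Ioc_of_le ht.le).2 hk).mul_continuousOn
      hdvc.continuousOn
  obtain ⟨L, hL⟩ := exists_tendsto_nhdsGT_of_hasDerivAt_of_integrableOn ht hderiv hk'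
  have hparts := intervalIntegral.integral_eq_sub_of_hasDerivAt_of_tendsto ht
    (f := fun s => k s * (v (t - s) - v t))
    (f' := fun s => k' s * (v (t - s) - v t) - k s * deriv v (t - s))
    (fun x hx => ((hderiv x hx).mul (hvx x)).congr_deriv (by ring))
    (hI1.sub hI2)
    (by simpa using hL.mul ((hvc.tendsto 0).mono_left nhdsWithin_le_nhds))
    ((hkt.mul hvc.continuousAt).tendsto.mono_left nhdsWithin_le_nhds)
  rw [intervalIntegral.integral_sub hI1 hI2] at hparts
  simp only [Pi.mul_apply, sub_self, sub_zero] at hparts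
  linarith

theorem hasDerivAt_integral_of_continuousAt_diag {E : Type*} [NormedAddCommGroup E]
    [NormedSpace ℝ E] [CompleteSpace E] {φ : ℝ → ℝ → E} {t₀ : ℝ}
    (hφ : ContinuousAt (Function.uncurry φ) (t₀, t₀))
    (hint : ∀ᶠ t in 𝓝 t₀, IntervalIntegrable (φ t) volume t₀ t) :
    HasDerivAt (fun t => ∫ s in t₀..t, φ t s) (φ t₀ t₀) t₀ := by
  rw [hasDerivAt_iff_isLittleO, Asymptotics.isLittleO_iff]
  intro c hc
  obtain ⟨ε, hε, hφε⟩ := Metric.eventually_nhds_iff.1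
    (hφ.eventually (Metric.closedBall_mem_nhds _ hc))
  filter_upwards [hint, Metric.ball_mem_nhds t₀ hε] with t ht htε
  have hbound : ∀ s ∈ Ι t₀ t, ‖φ t s - φ t₀ t₀‖ ≤ c := fun s hs => by
    rw [← dist_eq_norm]
    refine hφε (y := (t, s)) ?_
    rw [Prod.dist_eq, max_lt_iff]
    refine ⟨htε, lt_of_le_of_lt ?_ htε⟩
    rw [Real.dist_eq, Real.dist_eq]
    exact abs_sub_left_of_mem_uIcc (uIoc_subset_uIcc hs)
  calc ‖(∫ s in t₀..t, φ t s) - (∫ s in t₀..t₀, φ t₀ s) - (t - t₀) • φ t₀ t₀‖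
      = ‖∫ s in t₀..t, (φ t s - φ t₀ t₀)‖ := by
        rw [intervalIntegral.integral_same, sub_zero, intervalIntegral.integral_sub ht
          intervalIntegrable_const, intervalIntegral.integral_const]
    _ ≤ c * |t - t₀| := intervalIntegral.norm_integral_le_of_norm_le_const hbound
    _ = c * ‖t - t₀‖ := by rw [Real.norm_eq_abs]

theorem tconv_eq_intervalIntegral (k v : ℝ → ℝ) {t : ℝ} (ht : 0 ≤ t) :
    tconv k v t = ∫ s in (0)..t, k s * v (t - s) := by
  rw [tconv, ← intervalIntegral.integral_of_le ht]
  simpa using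
    intervalIntegral.integral_comp_sub_left (fun s => k s * v (t - s)) t (a := 0) (b := t)

theorem hasDerivAt_tconv {k v : ℝ → ℝ} {T t : ℝ} (hk : IntegrableOn k (Ioc 0 T))
    (hkt : ContinuousAt k t) (ht : t ∈ Ioo 0 T) (hv : ContDiff ℝ 1 v) :
    HasDerivAt (tconv k v) (k t * v 0 + ∫ s in (0)..t, k s * deriv v (t - s)) t := by
  have hT : 0 ≤ T := (ht.1.trans ht.2).le
  have hv' : ∀ x, HasDerivAt v (deriv v x) x := fun x =>
    (hv.differentiable one_ne_zero x).hasDerivAt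
  have hdvc := hv.continuous_deriv le_rfl
  have hkI : ∀ a ∈ Icc 0 T, ∀ b ∈ Icc 0 T, IntervalIntegrable k volume a b := fun a ha b hb =>
    ((intervalIntegrable_iff_integrableOn_Ioc_of_le hT).2 hk).mono_set
      (uIcc_subset_uIcc (by rwa [uIcc_of_le hT]) (by rwa [uIcc_of_le hT]))
  have hint : ∀ w : ℝ → ℝ, Continuous w → ∀ a ∈ Icc 0 T, ∀ b ∈ Icc 0 T,
      IntervalIntegrable (fun s => k s * w s) volume a b := fun w hw a ha b hb =>
    (hkI a ha b hb).mul_continuousOn hw.continuousOn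
  have h0 : (0 : ℝ) ∈ Icc 0 T := ⟨le_rfl, hT⟩
  have htT : t ∈ Icc 0 T := Ioo_subset_Icc_self ht
  obtain ⟨C, hC⟩ :=
    isCompact_Icc.exists_bound_of_continuousOn (hdvc.continuousOn (s := Icc (-T) T))
  have hfixed : HasDerivAt (fun τ => ∫ s in (0)..t, k s * v (τ - s))
      (∫ s in (0)..t, k s * deriv v (t - s)) t := by
    refine (intervalIntegral.hasDerivAt_integral_of_dominated_loc_of_deriv_le
      (bound := fun s => ‖k s‖ * C) (Ioo_mem_nhds ht.1 ht.2)
      (.of_forall fun τ => (hint _ (by fun_prop) 0 h0 t htT).def'.aestronglyMeasurable)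
      (hint _ (by fun_prop) 0 h0 t htT)
      (hint _ (hdvc.comp (continuous_sub_left t)) 0 h0 t htT).def'.aestronglyMeasurable
      (.of_forall fun s hs τ hτ => ?_)
      ((hkI 0 h0 t htT).norm.mul_const C)
      (.of_forall fun s _ τ _ => ((hv' (τ - s)).comp_sub_const τ s).const_mul (k s))).2
    · rw [uIoc_of_le ht.1.le] at hs
      rw [norm_mul]
      exact mul_le_mul_of_nonneg_left
        (hC _ ⟨by linarith [hτ.1, hs.2, ht.2], by linarith [hτ.2, hs.1]⟩) (norm_nonneg _)
  have hmoving : HasDerivAt (fun τ => ∫ s in t..τ, k s * v (τ - s)) (k t * v (t - t)) t :=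
    hasDerivAt_integral_of_continuousAt_diag (φ := fun τ s => k s * v (τ - s))
      ((hkt.comp continuousAt_snd).mul
        (hv.continuous.comp (continuous_fst.sub continuous_snd)).continuousAt)
      (by filter_upwards [Ioo_mem_nhds ht.1 ht.2] with τ hτ using
        hint _ (by fun_prop) t htT τ (Ioo_subset_Icc_self hτ))
  have hsplit : tconv k v =ᶠ[𝓝 t] fun τ =>
      (∫ s in (0)..t, k s * v (τ - s)) + ∫ s in t..τ, k s * v (τ - s) := by
    filter_upwards [Ioo_mem_nhds ht.1 ht.2] with τ hτ
    rw [tconv_eq_intervalIntegral k v hτ.1.le, intervalIntegral.integral_add_adjacent_intervals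
      (hint _ (by fun_prop) 0 h0 t htT) (hint _ (by fun_prop) t htT τ (Ioo_subset_Icc_self hτ))]
  refine ((hfixed.add hmoving).congr_of_eventuallyEq hsplit).congr_deriv ?_
  rw [sub_self, add_comm]

theorem deriv_tconv {k k' v : ℝ → ℝ} {T t : ℝ} (hk : IntegrableOn k (Ioc 0 T))
    (hderiv : ∀ x ∈ Ioo 0 T, HasDerivAt k (k' x) x) (hk' : IntegrableOn k' (Ioc 0 T))
    (ht : t ∈ Ioo 0 T) (hv : ContDiff ℝ 1 v) :
    deriv (tconv k v) t = k t * v t + ∫ s in Ioc 0 t, k' s * (v (t - s) - v t) := by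
  have hkt : ContinuousAt k t := (hderiv t ht).continuousAt
  rw [(hasDerivAt_tconv hk hkt ht hv).deriv, ← intervalIntegral.integral_of_le ht.1.le,
    intervalIntegral_deriv_mul_sub_eq ht.1 (fun x hx => hderiv x ⟨hx.1, hx.2.trans ht.2⟩) hkt
      (hk.mono_set (Ioc_subset_Ioc_right ht.2.le))
      (hk'.mono_set (Ioc_subset_Ioc_right ht.2.le)) hv]
  ring

theorem fundamental_identity_general (T : ℝ) (H k k' u : ℝ → ℝ)
    (hH : ContDiff ℝ 1 H)
    (hkint : IntegrableOn k (Ioc 0 T))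
    (hkderiv : ∀ t ∈ Ioo 0 T, HasDerivAt k (k' t) t)
    (hk'int : IntegrableOn k' (Ioc 0 T))
    (hu : ContDiff ℝ 1 u) :
    ∀ᵐ t ∂(volume.restrict (Ioo 0 T)),
      deriv H (u t) * deriv (tconv k u) t
        = deriv (tconv k fun s => H (u s)) t
          + (deriv H (u t) * u t - H (u t)) * k t
          + ∫ s in Ioc 0 t,
              (H (u (t - s)) - H (u t) - deriv H (u t) * (u (t - s) - u t)) * (-(k' s)) := by
  filter_upwards [ae_restrict_mem measurableSet_Ioo] with t ht
  rw [deriv_tconv hkint hkderiv hk'int ht hu,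
    deriv_tconv (v := fun s => H (u s)) hkint hkderiv hk'int ht (hH.comp hu)]
  have hHc := hH.continuous
  have huc := hu.continuous
  have hmul : ∀ w : ℝ → ℝ, Continuous w → IntegrableOn (fun s => k' s * w s) (Ioc 0 t) :=
    fun w hw => (hk'int.mono_set (Ioc_subset_Ioc_right ht.2.le)).mul_continuousOn_of_subset
      hw.continuousOn measurableSet_Ioc isCompact_Icc Ioc_subset_Icc_self
  have hremainder : ∫ s in Ioc 0 t,
        (H (u (t - s)) - H (u t) - deriv H (u t) * (u (t - s) - u t)) * (-(k' s))
      = deriv H (u t) * (∫ s in Ioc 0 t, k' s * (u (t - s) - u t))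
        - ∫ s in Ioc 0 t, k' s * (H (u (t - s)) - H (u t)) := by
    rw [← integral_const_mul, ← integral_sub ((hmul _ (by fun_prop)).const_mul _)
      (hmul _ (by fun_prop))]
    exact integral_congr_ae (ae_of_all _ fun s => by ring)
  rw [hremainder]
  ring

/-- Fundamental identity for the time-fractional derivative (Zacher). -/
theorem fundamental_identity (T : ℝ) (hT : 0 < T) (H k k' u : ℝ → ℝ)
    (hH : ContDiff ℝ 1 H) (hHconv : ConvexOn ℝ Set.univ H)
    (hknn : ∀ t ∈ Ioc 0 T, 0 ≤ k t) (hkmono : AntitoneOn k (Ioc 0 T))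
    (hkint : IntegrableOn k (Ioc 0 T))
    (hkderiv : ∀ t ∈ Ioo 0 T, HasDerivAt k (k' t) t)
    (hk'int : IntegrableOn k' (Ioc 0 T))
    (hu : ContDiff ℝ 1 u) :
    ∀ᵐ t ∂(volume.restrict (Ioo 0 T)),
      deriv H (u t) * deriv (tconv k u) t
        = deriv (tconv k fun s => H (u s)) t
          + (deriv H (u t) * u t - H (u t)) * k t
          + ∫ s in Ioc 0 t,
              (H (u (t - s)) - H (u t) - deriv H (u t) * (u (t - s) - u t)) * (-(k' s)) :=
  fundamental_identity_general T H k k' u hH hkint hkderiv hk'int hu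
end
end

section
/- Let $k \in W^{1,1}([0,T])$ be nonnegative and nonincreasing and let $u \in W^{1,2}([0,T])$. Then for a.e. $t \in (0,T)$, $u^-(t)\,\frac{d}{dt}(k*u)(t) \leq -\frac{1}{2}\frac{d}{dt}\big(k*(u^-)^2\big)(t)$, where $u^- = \max\{-u,0\}$. -/
/-!
Writing `k τ = k₀ + ∫₀^τ k'` and exchanging the order of integration gives
`k * w = k₀ (1 * w) + k' * (1 * w)`. The primitive `1 * w` of a bounded `w` is Lipschitz, so one
may differentiate under the integral sign: `(k * w)'(t) = k₀ w(t) + ∫₀^t k'(s) w(t - s) ds` for `w`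
bounded and continuous on `(0, T)`. This formula is linear in `w`. For `g = 2 u⁻(t) u + (u⁻)²`,
the tangent-line inequality of the convex function `x ↦ (x⁻)²` at `u(t)` says that
`g(t - s) ≥ g(t) = -u⁻(t)²`, hence `(k * g)'(t) = k(t) g(t) + ∫₀^t k'(s) (g(t - s) - g(t)) ds ≤ 0`
because `k ≥ 0` and `k' ≤ 0`.
-/

open MeasureTheory Set

noncomputable section

open Filter Topology
open scoped NNReal

lemma max_neg_zero_mul_self (b : ℝ) : max (-b) 0 * b = -max (-b) 0 ^ 2 := by
  rcases le_total b 0 with h | h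
  · rw [max_eq_left (by linarith)]; ring
  · rw [max_eq_right (by linarith)]; ring

lemma max_neg_zero_sq_tangent_le (a b : ℝ) :
    max (-b) 0 ^ 2 - 2 * max (-b) 0 * (a - b) ≤ max (-a) 0 ^ 2 := by
  have hb := max_neg_zero_mul_self b
  nlinarith [sq_nonneg (max (-a) 0 - max (-b) 0), le_max_left (-a) 0, le_max_right (-b) 0,
    mul_nonneg (le_max_right (-b) 0) (neg_le_iff_add_nonneg.1 (le_max_left (-a) 0))]

lemma abs_max_neg_zero_sq_le {a M : ℝ} (h : |a| ≤ M) : |max (-a) 0 ^ 2| ≤ M ^ 2 := by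
  rw [abs_of_nonneg (by positivity)]
  exact pow_le_pow_left₀ (le_max_right _ _) ((max_le (neg_le_abs _) (abs_nonneg _)).trans h) 2

lemma ContinuousOn.max_neg_zero_sq {u : ℝ → ℝ} {s : Set ℝ} (hu : ContinuousOn u s) :
    ContinuousOn (fun x => max (-u x) 0 ^ 2) s := fun x hx =>
  ((hu x hx).neg.max continuousWithinAt_const).pow 2

lemma HasDerivAt.nonpos_of_antitoneOn {f : ℝ → ℝ} {f' x : ℝ} {s : Set ℝ}
    (hd : HasDerivAt f f' x) (hf : AntitoneOn f s) (hs : s ∈ 𝓝 x) : f' ≤ 0 := by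
  obtain ⟨a, b, hx, hab⟩ := mem_nhds_iff_exists_Ioo_subset.1 hs
  exact hd.hasDerivWithinAt.nonpos_of_antitoneOn (isOpen_Ioo.preperfect x hx) (hf.mono hab)

lemma exists_eq_add_integral_of_hasDerivAt {f f' : ℝ → ℝ} {a b : ℝ} (hab : a < b)
    (hf : ∀ x ∈ Ioo a b, HasDerivAt f (f' x) x) (hf' : IntegrableOn f' (Ioc a b)) :
    ∃ C, ∀ x ∈ Ioo a b, f x = C + ∫ r in Ioc a x, f' r := by
  obtain ⟨c, hc⟩ := nonempty_Ioo.2 hab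
  have hint : ∀ x ∈ Ioo a b, IntervalIntegrable f' volume a x := fun x hx =>
    (intervalIntegrable_iff_integrableOn_Ioc_of_le hx.1.le).2
      (hf'.mono_set (Ioc_subset_Ioc_right hx.2.le))
  refine ⟨f c - ∫ r in a..c, f' r, fun x hx => ?_⟩
  have hcx : IntervalIntegrable f' volume c x := (hint c hc).symm.trans (hint x hx)
  have hftc : ∫ r in c..x, f' r = f x - f c :=
    intervalIntegral.integral_eq_sub_of_hasDerivAt
      (fun y hy => hf y (ordConnected_Ioo.uIcc_subset hc hx hy)) hcx
  rw [← intervalIntegral.integral_of_le hx.1.le,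
    ← intervalIntegral.integral_add_adjacent_intervals (hint c hc) hcx, hftc]
  ring

lemma exists_abs_le_of_hasDerivAt {f f' : ℝ → ℝ} {a b : ℝ} (hab : a < b)
    (hf : ∀ x ∈ Ioo a b, HasDerivAt f (f' x) x) (hf' : IntegrableOn f' (Ioc a b)) :
    ∃ M, ∀ x ∈ Ioo a b, |f x| ≤ M := by
  obtain ⟨C, hC⟩ := exists_eq_add_integral_of_hasDerivAt hab hf hf'
  refine ⟨|C| + ∫ r in Ioc a b, |f' r|, fun x hx => ?_⟩
  have hbound : |∫ r in Ioc a x, f' r| ≤ ∫ r in Ioc a b, |f' r| :=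
    abs_integral_le_integral_abs.trans (setIntegral_mono_set hf'.abs
      (Eventually.of_forall fun r => abs_nonneg _) (Ioc_subset_Ioc_right hx.2.le).eventuallyLE)
  rw [hC x hx]
  exact (abs_add_le _ _).trans (by linarith)

/-- Both sides integrate `f r * g s` over the triangle `0 < r, 0 < s, r + s ≤ y`. -/
lemma integral_Ioc_mul_integral_Ioc_comm {f g : ℝ → ℝ} {y : ℝ}
    (hf : IntegrableOn f (Ioc 0 y)) (hg : IntegrableOn g (Ioc 0 y)) :
    IntegrableOn (fun s => (∫ r in Ioc 0 (y - s), f r) * g s) (Ioc 0 y) ∧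
      ∫ s in Ioc 0 y, (∫ r in Ioc 0 (y - s), f r) * g s
        = ∫ r in Ioc 0 y, f r * ∫ s in Ioc 0 (y - r), g s := by
  set F : ℝ → ℝ → ℝ := fun s r => (Ioc 0 y).indicator g s * (Ioc 0 (y - s)).indicator f r
  have hsymm : ∀ s r, F s r = (Ioc 0 y).indicator f r * (Ioc 0 (y - r)).indicator g s := by
    intro s r
    simp only [F, indicator, mem_Ioc]
    split_ifs <;> grind
  have hS : MeasurableSet {p : ℝ × ℝ | 0 < p.1 ∧ 0 < p.2 ∧ p.1 + p.2 ≤ y} :=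
    (measurableSet_lt measurable_const measurable_fst).inter
      ((measurableSet_lt measurable_const measurable_snd).inter
        (measurableSet_le (measurable_fst.add measurable_snd) measurable_const))
  have hFint : Integrable (Function.uncurry F) (volume.prod volume) := by
    have hprod := (hg.integrable_indicator measurableSet_Ioc).mul_prod
      (hf.integrable_indicator measurableSet_Ioc)
    refine (hprod.indicator hS).congr (Eventually.of_forall fun p => ?_)
    simp only [F, Function.uncurry, indicator, mem_Ioc, mem_ofPred_eq]
    split_ifs <;> grind
  have hleft : ∀ s, ∫ r, F s r
      = (Ioc 0 y).indicator (fun s => (∫ r in Ioc 0 (y - s), f r) * g s) s := by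
    intro s
    rw [integral_const_mul, integral_indicator measurableSet_Ioc, indicator_mul_right, mul_comm]
  have hright : ∀ r, ∫ s, F s r
      = (Ioc 0 y).indicator (fun r => f r * ∫ s in Ioc 0 (y - r), g s) r := by
    intro r
    simp_rw [hsymm]
    rw [integral_const_mul, integral_indicator measurableSet_Ioc, indicator_mul_left]
  have hint := hFint.integral_prod_left
  simp only [Function.uncurry_apply_pair, hleft] at hint
  refine ⟨(integrable_indicator_iff measurableSet_Ioc).1 hint, ?_⟩
  rw [← integral_indicator measurableSet_Ioc, ← integral_indicator measurableSet_Ioc]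
  simp_rw [← hleft, ← hright]
  exact integral_integral_swap hFint

lemma tconv_eq_add_integral {k k' w : ℝ → ℝ} {k0 y : ℝ}
    (hk : ∀ τ ∈ Ioo 0 y, k τ = k0 + ∫ r in Ioc 0 τ, k' r)
    (hk' : IntegrableOn k' (Ioc 0 y)) (hw : IntegrableOn w (Ioc 0 y)) :
    tconv k w y
      = k0 * (∫ s in Ioc 0 y, w s) + ∫ r in Ioc 0 y, k' r * ∫ s in Ioc 0 (y - r), w s := by
  obtain ⟨hint, hcomm⟩ := integral_Ioc_mul_integral_Ioc_comm hk' hw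
  calc tconv k w y = ∫ s in Ioc 0 y, (k0 * w s + (∫ r in Ioc 0 (y - s), k' r) * w s) := by
        rw [tconv, integral_Ioc_eq_integral_Ioo, integral_Ioc_eq_integral_Ioo]
        refine setIntegral_congr_fun measurableSet_Ioo fun s hs => ?_
        rw [hk (y - s) ⟨by linarith [hs.2], by linarith [hs.1]⟩]
        ring
    _ = _ := by rw [integral_add (hw.const_mul k0) hint, integral_const_mul, hcomm]

lemma lipschitzWith_intervalIntegral {g : ℝ → ℝ} {M a : ℝ} (hg : Integrable g)
    (hgM : ∀ x, |g x| ≤ M) : LipschitzWith M.toNNReal (fun x => ∫ r in a..x, g r) := by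
  refine LipschitzWith.of_dist_le_mul fun x y => ?_
  rw [Real.dist_eq, intervalIntegral.integral_interval_sub_left hg.intervalIntegrable
    hg.intervalIntegrable, Real.coe_toNNReal _ ((abs_nonneg _).trans (hgM 0)), Real.dist_eq]
  simpa only [Real.norm_eq_abs] using
    intervalIntegral.norm_integral_le_of_norm_le_const (a := y) (b := x) (C := M) fun r _ =>
      (Real.norm_eq_abs (g r)).trans_le (hgM r)

lemma abs_intervalIntegral_le_integral_abs {g : ℝ → ℝ} {a b : ℝ} (hg : Integrable g) :
    |∫ r in a..b, g r| ≤ ∫ r, |g r| :=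
  intervalIntegral.norm_integral_le_integral_norm_uIoc.trans
    (setIntegral_le_integral hg.norm (Eventually.of_forall fun _ => norm_nonneg _))

lemma intervalIntegral_indicator_Ioo_eq {w : ℝ → ℝ} {T x : ℝ} (hx : x < T) :
    ∫ r in 0..x, (Ioo 0 T).indicator w r = ∫ s in Ioc 0 x, w s := by
  rcases le_total x 0 with hx0 | hx0
  · rw [Ioc_eq_empty (not_lt.2 hx0), Measure.restrict_empty, integral_zero_measure,
      intervalIntegral.integral_congr (g := fun _ => 0) fun r hr => ?_,
      intervalIntegral.integral_zero]
    rw [uIcc_of_ge hx0] at hr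
    exact indicator_of_notMem (fun h => hr.2.not_gt h.1) w
  · rw [intervalIntegral.integral_of_le hx0]
    exact setIntegral_congr_fun measurableSet_Ioc fun r hr =>
      indicator_of_mem (show r ∈ Ioo 0 T from ⟨hr.1, hr.2.trans_lt hx⟩) w

lemma hasDerivAt_intervalIntegral_indicator_Ioo {w : ℝ → ℝ} {T x : ℝ}
    (hw : ContinuousOn w (Ioo 0 T)) (hwi : IntegrableOn w (Ioo 0 T)) (hx0 : x ≠ 0) (hxT : x < T) :
    HasDerivAt (fun x => ∫ r in 0..x, (Ioo 0 T).indicator w r) ((Ioo 0 T).indicator w x) x := by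
  have hint : Integrable ((Ioo 0 T).indicator w) := hwi.integrable_indicator measurableSet_Ioo
  refine intervalIntegral.integral_hasDerivAt_right hint.intervalIntegrable
    hint.aestronglyMeasurable.stronglyMeasurableAtFilter ?_
  rcases hx0.lt_or_gt with hneg | hpos
  · exact continuousAt_const.congr (eventually_of_mem (Iio_mem_nhds hneg) fun y hy =>
      (indicator_of_notMem (fun h => hy.not_gt h.1) w).symm)
  · exact (hw.continuousAt (Ioo_mem_nhds hpos hxT)).congr
      (eventually_of_mem (Ioo_mem_nhds hpos hxT) fun y hy => (indicator_of_mem hy w).symm)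

lemma hasDerivAt_integral_mul_comp_sub {μ : Measure ℝ} {κ W W' : ℝ → ℝ} {K : ℝ≥0} {C t : ℝ}
    (hκ : Integrable κ μ) (hW : LipschitzWith K W) (hWC : ∀ x, |W x| ≤ C)
    (hW' : AEStronglyMeasurable (fun r => W' (t - r)) μ)
    (hd : ∀ᵐ r ∂μ, HasDerivAt W (W' (t - r)) (t - r)) :
    HasDerivAt (fun y => ∫ r, κ r * W (y - r) ∂μ) (∫ r, κ r * W' (t - r) ∂μ) t := by
  have hWmeas : ∀ y, AEStronglyMeasurable (fun r => W (y - r)) μ := fun y =>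
    (hW.continuous.comp (continuous_const.sub continuous_id)).aestronglyMeasurable
  have hmeas : ∀ y, AEStronglyMeasurable (fun r => κ r * W (y - r)) μ := fun y =>
    hκ.aestronglyMeasurable.mul (hWmeas y)
  have hlip : ∀ r, LipschitzOnWith (Real.nnabs (|κ r| * K)) (fun y => κ r * W (y - r)) univ := by
    intro r
    refine (LipschitzWith.of_dist_le_mul fun x y => ?_).lipschitzOnWith
    rw [Real.coe_nnabs, abs_of_nonneg (by positivity), Real.dist_eq, ← mul_sub, abs_mul, mul_assoc]
    refine mul_le_mul_of_nonneg_left ?_ (abs_nonneg _)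
    simpa [Real.dist_eq] using hW.dist_le_mul (x - r) (y - r)
  refine (hasDerivAt_integral_of_dominated_loc_of_lip univ_mem (Eventually.of_forall hmeas)
    (hκ.mul_bdd (hWmeas t) (Eventually.of_forall fun r => hWC _)) (hκ.aestronglyMeasurable.mul hW')
    (Eventually.of_forall hlip) (hκ.abs.mul_const _) ?_).2
  filter_upwards [hd] with r hr
  simpa using (hr.comp t ((hasDerivAt_id t).sub_const r)).const_mul (κ r)

lemma setIntegral_mul_indicator_comp_sub {k' w : ℝ → ℝ} {T t : ℝ} (ht : t ∈ Ioo 0 T) :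
    ∫ r in Ioc 0 T, k' r * (Ioo 0 T).indicator w (t - r) = ∫ s in Ioc 0 t, k' s * w (t - s) := by
  refine (setIntegral_eq_of_subset_of_forall_sdiff_eq_zero measurableSet_Ioc
    (Ioc_subset_Ioc_right ht.2.le) fun r hr => ?_).trans ?_
  · have htr : t < r := not_le.1 fun h => hr.2 ⟨hr.1.1, h⟩
    rw [indicator_of_notMem (fun h => h.1.not_ge (by linarith)), mul_zero]
  · rw [integral_Ioc_eq_integral_Ioo, integral_Ioc_eq_integral_Ioo]
    refine setIntegral_congr_fun measurableSet_Ioo fun r hr => ?_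
    rw [indicator_of_mem (show t - r ∈ Ioo 0 T from ⟨by linarith [hr.2], by linarith [hr.1, ht.2]⟩)]

lemma hasDerivAt_tconv_s2 {k k' w : ℝ → ℝ} {T k0 M t : ℝ}
    (hk : ∀ τ ∈ Ioo 0 T, k τ = k0 + ∫ r in Ioc 0 τ, k' r) (hk' : IntegrableOn k' (Ioc 0 T))
    (hw : ContinuousOn w (Ioo 0 T)) (hwM : ∀ x ∈ Ioo 0 T, |w x| ≤ M) (ht : t ∈ Ioo 0 T) :
    HasDerivAt (tconv k w) (k0 * w t + ∫ s in Ioc 0 t, k' s * w (t - s)) t := by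
  have hwi : IntegrableOn w (Ioo 0 T) :=
    Integrable.of_bound (hw.aestronglyMeasurable measurableSet_Ioo) M
      ((ae_restrict_iff' measurableSet_Ioo).2 (Eventually.of_forall hwM))
  have hwt_int : Integrable ((Ioo 0 T).indicator w) := hwi.integrable_indicator measurableSet_Ioo
  have hwt_le : ∀ x, |(Ioo 0 T).indicator w x| ≤ M := fun x => by
    by_cases hx : x ∈ Ioo 0 T
    · rw [indicator_of_mem hx]; exact hwM x hx
    · rw [indicator_of_notMem hx, abs_zero]; exact (abs_nonneg _).trans (hwM t ht)
  -- extending `w` by zero outside `(0, T)` makes its primitive `W` Lipschitz on all of `ℝ`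
  set W : ℝ → ℝ := fun x => ∫ r in 0..x, (Ioo 0 T).indicator w r
  have hW : ∀ x < T, W x = ∫ s in Ioc 0 x, w s := fun x hx => intervalIntegral_indicator_Ioo_eq hx
  have hrep : ∀ y ∈ Ioo 0 T, tconv k w y = k0 * W y + ∫ r in Ioc 0 T, k' r * W (y - r) := by
    intro y hy
    have hsub : Ioc 0 y ⊆ Ioc 0 T := Ioc_subset_Ioc_right hy.2.le
    have hvanish : ∀ r ∈ Ioc 0 T \ Ioc 0 y, k' r * ∫ s in Ioc 0 (y - r), w s = 0 := fun r hr => by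
      rw [Ioc_eq_empty (by linarith [not_le.1 fun h => hr.2 ⟨hr.1.1, h⟩]),
        Measure.restrict_empty, integral_zero_measure, mul_zero]
    rw [tconv_eq_add_integral (fun τ hτ => hk τ ⟨hτ.1, hτ.2.trans hy.2⟩) (hk'.mono_set hsub)
      (hwi.mono_set fun s hs => ⟨hs.1, hs.2.trans_lt hy.2⟩), hW y hy.2,
      ← setIntegral_eq_of_subset_of_forall_sdiff_eq_zero measurableSet_Ioc hsub hvanish]
    congr 1
    exact setIntegral_congr_fun measurableSet_Ioc fun r hr => by
      rw [hW (y - r) (by linarith [hr.1, hy.2])]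
  have hΦ := hasDerivAt_integral_mul_comp_sub (μ := volume.restrict (Ioc 0 T))
    (W' := (Ioo 0 T).indicator w) hk' (lipschitzWith_intervalIntegral hwt_int hwt_le)
    (fun x => abs_intervalIntegral_le_integral_abs hwt_int)
    (hwt_int.aestronglyMeasurable.comp_quasiMeasurePreserving
      (quasiMeasurePreserving_sub_left_of_right_invariant volume t)).restrict
    (by
      filter_upwards [ae_restrict_mem measurableSet_Ioc,
        ae_restrict_of_ae (compl_mem_ae_iff.2 (measure_singleton t))] with r hr hrt
      exact hasDerivAt_intervalIntegral_indicator_Ioo hw hwi (sub_ne_zero.2 (Ne.symm hrt))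
        (by linarith [hr.1, ht.2]))
  have hsum :=
    ((hasDerivAt_intervalIntegral_indicator_Ioo hw hwi ht.1.ne' ht.2).const_mul k0).add hΦ
  rw [indicator_of_mem ht, setIntegral_mul_indicator_comp_sub ht] at hsum
  exact hsum.congr_of_eventuallyEq (eventually_of_mem (Ioo_mem_nhds ht.1 ht.2) hrep)

lemma integrableOn_mul_comp_sub {k w : ℝ → ℝ} {t M : ℝ} (hk : IntegrableOn k (Ioc 0 t))
    (hw : ContinuousOn w (Ioo 0 t)) (hwM : ∀ x ∈ Ioo 0 t, |w x| ≤ M) :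
    IntegrableOn (fun s => k s * w (t - s)) (Ioc 0 t) := by
  have hmaps : MapsTo (fun s => t - s) (Ioo 0 t) (Ioo 0 t) := fun s hs =>
    ⟨by linarith [hs.2], by linarith [hs.1]⟩
  have hwc : ContinuousOn (fun s => w (t - s)) (Ioo 0 t) :=
    hw.comp (continuousOn_const.sub continuousOn_id) hmaps
  rw [integrableOn_Ioc_iff_integrableOn_Ioo] at hk ⊢
  refine IntegrableOn.congr_fun
    (hk.bdd_mul (hwc.aestronglyMeasurable measurableSet_Ioo) (c := M) ?_)
    (fun s _ => mul_comm _ _) measurableSet_Ioo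
  exact (ae_restrict_iff' measurableSet_Ioo).2 (Eventually.of_forall fun s hs => hwM _ (hmaps hs))

lemma add_integral_mul_comp_sub_nonpos {k k' g : ℝ → ℝ} {k0 t : ℝ}
    (hk : k t = k0 + ∫ s in Ioc 0 t, k' s) (hkt : 0 ≤ k t) (hk' : ∀ s ∈ Ioo 0 t, k' s ≤ 0)
    (hgt : g t ≤ 0) (hg : ∀ s ∈ Ioo 0 t, g t ≤ g (t - s))
    (hk'int : IntegrableOn k' (Ioc 0 t))
    (hint : IntegrableOn (fun s => k' s * g (t - s)) (Ioc 0 t)) :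
    k0 * g t + ∫ s in Ioc 0 t, k' s * g (t - s) ≤ 0 := by
  have hsplit : k0 * g t + ∫ s in Ioc 0 t, k' s * g (t - s)
      = k t * g t + ∫ s in Ioc 0 t, k' s * (g (t - s) - g t) := by
    simp_rw [mul_sub]
    rw [integral_sub hint (hk'int.mul_const _), integral_mul_const, hk]
    ring
  have hterm : ∫ s in Ioc 0 t, k' s * (g (t - s) - g t) ≤ 0 := by
    rw [integral_Ioc_eq_integral_Ioo]
    exact setIntegral_nonpos measurableSet_Ioo fun s hs =>
      mul_nonpos_of_nonpos_of_nonneg (hk' s hs) (sub_nonneg.2 (hg s hs))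
  rw [hsplit]
  linarith [mul_nonpos_of_nonneg_of_nonpos hkt hgt]

lemma max_neg_zero_mul_add_integral_le {k k' u : ℝ → ℝ} {k0 t M : ℝ}
    (hk : k t = k0 + ∫ s in Ioc 0 t, k' s) (hkt : 0 ≤ k t) (hk' : ∀ s ∈ Ioo 0 t, k' s ≤ 0)
    (hk'int : IntegrableOn k' (Ioc 0 t)) (hu : ContinuousOn u (Ioo 0 t))
    (huM : ∀ x ∈ Ioo 0 t, |u x| ≤ M) :
    max (-u t) 0 * (k0 * u t + ∫ s in Ioc 0 t, k' s * u (t - s))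
      ≤ -((1 / 2) * (k0 * max (-u t) 0 ^ 2 + ∫ s in Ioc 0 t, k' s * max (-u (t - s)) 0 ^ 2)) := by
  set β := max (-u t) 0
  have hint_u := integrableOn_mul_comp_sub hk'int hu huM
  have hint_sq := integrableOn_mul_comp_sub hk'int hu.max_neg_zero_sq fun x hx =>
    abs_max_neg_zero_sq_le (huM x hx)
  have hβ : β * u t = -β ^ 2 := max_neg_zero_mul_self (u t)
  have key := add_integral_mul_comp_sub_nonpos (g := fun x => 2 * β * u x + max (-u x) 0 ^ 2)
    hk hkt hk' (by nlinarith)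
    (fun s _ => by nlinarith [max_neg_zero_sq_tangent_le (u (t - s)) (u t)])
    hk'int (IntegrableOn.congr_fun ((hint_u.const_mul (2 * β)).add hint_sq)
      (fun s _ => by simp only [Pi.add_apply]; ring) measurableSet_Ioc)
  have hsplit : ∫ s in Ioc 0 t, k' s * (2 * β * u (t - s) + max (-u (t - s)) 0 ^ 2)
      = 2 * β * (∫ s in Ioc 0 t, k' s * u (t - s))
        + ∫ s in Ioc 0 t, k' s * max (-u (t - s)) 0 ^ 2 := by
    rw [← integral_const_mul, ← integral_add (hint_u.const_mul (2 * β)) hint_sq]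
    congr 1 with s
    ring
  rw [hsplit] at key
  linear_combination (1 / 2) * key

theorem negative_part_inequality_general (T : ℝ) (hT : 0 < T) (k k' u u' : ℝ → ℝ)
    (hknn : ∀ t ∈ Ioc 0 T, 0 ≤ k t) (hkmono : AntitoneOn k (Ioc 0 T))
    (hkderiv : ∀ t ∈ Ioo 0 T, HasDerivAt k (k' t) t)
    (hk'int : IntegrableOn k' (Ioc 0 T))
    (huderiv : ∀ t ∈ Ioo 0 T, HasDerivAt u (u' t) t)
    (hu'2 : MemLp u' 2 (volume.restrict (Ioc 0 T))) :
    ∀ᵐ t ∂(volume.restrict (Ioo 0 T)),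
      max (-u t) 0 * deriv (tconv k u) t
        ≤ -((1 / 2) * deriv (tconv k fun s => (max (-u s) 0) ^ 2) t) := by
  obtain ⟨k0, hk⟩ := exists_eq_add_integral_of_hasDerivAt hT hkderiv hk'int
  obtain ⟨M, hM⟩ := exists_abs_le_of_hasDerivAt hT huderiv (hu'2.integrable one_le_two)
  have hu : ContinuousOn u (Ioo 0 T) := fun x hx => (huderiv x hx).continuousAt.continuousWithinAt
  filter_upwards [ae_restrict_mem measurableSet_Ioo] with t ht
  have hIoo : Ioo 0 t ⊆ Ioo 0 T := Ioo_subset_Ioo_right ht.2.le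
  rw [(hasDerivAt_tconv_s2 hk hk'int hu hM ht).deriv, (hasDerivAt_tconv_s2 hk hk'int
    hu.max_neg_zero_sq (fun x hx => abs_max_neg_zero_sq_le (hM x hx)) ht).deriv]
  exact max_neg_zero_mul_add_integral_le (hk t ht) (hknn t (Ioo_subset_Ioc_self ht))
    (fun s hs => (hkderiv s (hIoo hs)).nonpos_of_antitoneOn hkmono
      (mem_of_superset (Ioo_mem_nhds (hIoo hs).1 (hIoo hs).2) Ioo_subset_Ioc_self))
    (hk'int.mono_set (Ioc_subset_Ioc_right ht.2.le)) (hu.mono hIoo) fun x hx => hM x (hIoo hx)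

theorem negative_part_inequality (T : ℝ) (hT : 0 < T) (k k' u u' : ℝ → ℝ)
    (hknn : ∀ t ∈ Ioc 0 T, 0 ≤ k t) (hkmono : AntitoneOn k (Ioc 0 T))
    (hkint : IntegrableOn k (Ioc 0 T))
    (hkderiv : ∀ t ∈ Ioo 0 T, HasDerivAt k (k' t) t)
    (hk'int : IntegrableOn k' (Ioc 0 T))
    (huderiv : ∀ t ∈ Ioo 0 T, HasDerivAt u (u' t) t)
    (hu2 : MemLp u 2 (volume.restrict (Ioc 0 T)))
    (hu'2 : MemLp u' 2 (volume.restrict (Ioc 0 T))) :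
    ∀ᵐ t ∂(volume.restrict (Ioo 0 T)),
      max (-u t) 0 * deriv (tconv k u) t
        ≤ -((1 / 2) * deriv (tconv k fun s => (max (-u s) 0) ^ 2) t) :=
  negative_part_inequality_general T hT k k' u u' hknn hkmono hkderiv hk'int huderiv hu'2
end
end
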